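/- arXiv:2601.12210 — 5 statements merged into one kernel-verified Lean document; each statement's English description precedes it below -/
import Mathlib

section
/- For the cascade system with A = [[-a₁,0,0],[g₁,-a₂,0],[0,g₂,-a₃]] (distinct aᵢ > 0, g₁,g₂ > 0), B = (1,0,0)ᵀ, C = (0,0,1), the impulse response g(t) = C e^{tA} B attains its maximum on [0,∞) at a unique point t* ∈ (0,∞); g is strictly increasing on [0,t*) and strictly decreasing on (t*,∞). -/
/-!
Since the eigenvalues `-a₁, -a₂, -a₃` of `A` are distinct, diagonalising `A` gives
`g(t) = ∑ cᵢ e^{-aᵢ t}` with `∑ cᵢ = 0`, `∑ cᵢ aᵢ = 0` and `∑ cᵢ aᵢ² = g₁ g₂`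
(these are `CB = CAB = 0` and `CA²B = g₁ g₂`), so `g(0) = g'(0) = 0 < g''(0)` and `g → 0`.
Dividing a combination of `n` distinct exponentials by one of them and differentiating
leaves `n - 1` exponentials, so by Rolle's theorem and induction it has at most `n - 1` zeros
unless it vanishes identically. Hence `g'`, which vanishes at `0`, has at most one zero in
`(0, ∞)`. As `g` increases right after `0` and returns to `0` at infinity, `g'` has exactly one
such zero `t*`, positive before it and negative after it.
-/

open Matrix Set Filter

noncomputable def Acas (a₁ a₂ a₃ g₁ g₂ : ℝ) : Matrix (Fin 3) (Fin 3) ℝ :=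
  !![-a₁, 0, 0; g₁, -a₂, 0; 0, g₂, -a₃]

def Bcas : Fin 3 → ℝ := ![1, 0, 0]

/-- impulse response g(t) = C e^{tA} B with C = (0,0,1) -/
noncomputable def impResp (a₁ a₂ a₃ g₁ g₂ : ℝ) (t : ℝ) : ℝ :=
  ((NormedSpace.exp (t • Acas a₁ a₂ a₃ g₁ g₂)) *ᵥ Bcas) 2

/-- z(τ,T) = C e^{Aτ} (I - e^{AT})⁻¹ B -/
noncomputable def zfun (a₁ a₂ a₃ g₁ g₂ : ℝ) (τ T : ℝ) : ℝ :=
  ((NormedSpace.exp (τ • Acas a₁ a₂ a₃ g₁ g₂) *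
    (1 - NormedSpace.exp (T • Acas a₁ a₂ a₃ g₁ g₂))⁻¹) *ᵥ Bcas) 2

noncomputable def zmaxF (a₁ a₂ a₃ g₁ g₂ T : ℝ) : ℝ :=
  sSup ((fun τ => zfun a₁ a₂ a₃ g₁ g₂ τ T) '' Set.Icc 0 T)

noncomputable def zminF (a₁ a₂ a₃ g₁ g₂ T : ℝ) : ℝ :=
  sInf ((fun τ => zfun a₁ a₂ a₃ g₁ g₂ τ T) '' Set.Icc 0 T)

open Topology Real

noncomputable def expSum {ι : Type*} [Fintype ι] (c b : ι → ℝ) (t : ℝ) : ℝ :=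
  ∑ i, c i * exp (b i * t)

section ExpSum

variable {ι : Type*} [Fintype ι] (c b : ι → ℝ)

theorem hasDerivAt_expSum (t : ℝ) : HasDerivAt (expSum c b) (expSum (c * b) b t) t := by
  unfold expSum
  refine HasDerivAt.fun_sum fun i _ => ?_
  exact (((hasDerivAt_id t).const_mul (b i)).exp.const_mul (c i)).congr_deriv
    (by simp only [Pi.mul_apply, mul_one, id]; ring)

theorem differentiable_expSum : Differentiable ℝ (expSum c b) :=
  fun t => (hasDerivAt_expSum c b t).differentiableAt

theorem deriv_expSum : deriv (expSum c b) = expSum (c * b) b :=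
  funext fun t => (hasDerivAt_expSum c b t).deriv

theorem tendsto_expSum_atTop {b : ι → ℝ} (hb : ∀ i, b i < 0) :
    Tendsto (expSum c b) atTop (𝓝 0) := by
  have h : ∀ i, Tendsto (fun t => c i * exp (b i * t)) atTop (𝓝 0) := fun i => by
    simpa using (tendsto_exp_atBot.comp
      (tendsto_id.const_mul_atTop_of_neg (hb i))).const_mul (c i)
  unfold expSum
  simpa using tendsto_finsetSum Finset.univ fun i _ => h i

theorem expSum_sub_const (β t : ℝ) :
    expSum c (fun i => b i - β) t = exp (-(β * t)) * expSum c b t := by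
  simp only [expSum, Finset.mul_sum]
  refine Finset.sum_congr rfl fun i _ => ?_
  rw [mul_left_comm, ← exp_add]
  ring_nf

end ExpSum

theorem eq_zero_of_expSum_eq_zero : ∀ {n : ℕ} {c b x : Fin n → ℝ}, Function.Injective b →
    StrictMono x → (∀ k, expSum c b (x k) = 0) → c = 0
  | 0, _, _, _, _, _, _ => Subsingleton.elim _ _
  | n + 1, c, b, x, hb, hx, hzero => by
    set β := b (Fin.last n)
    set b' : Fin (n + 1) → ℝ := fun i => b i - β
    have hzero' : ∀ k, expSum c b' (x k) = 0 := fun k => by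
      rw [expSum_sub_const, hzero, mul_zero]
    have hrolle : ∀ k : Fin n, ∃ y ∈ Ioo (x k.castSucc) (x k.succ), expSum (c * b') b' y = 0 :=
      fun k => exists_hasDerivAt_eq_zero (hx Fin.castSucc_lt_succ)
        (differentiable_expSum c b').continuous.continuousOn
        (by rw [hzero', hzero']) fun y _ => hasDerivAt_expSum c b' y
    choose y hy hy0 using hrolle
    have hy_mono : StrictMono y := fun i j hij =>
      calc y i < x i.succ := (hy i).2
        _ ≤ x j.castSucc := hx.monotone (Fin.succ_le_castSucc_iff.2 hij)
        _ < y j := (hy j).1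
    -- the last term of the derivative vanishes since `b' (last n) = 0`
    have hinit : ∀ t, expSum (c * b') b' t = expSum (Fin.init (c * b')) (Fin.init b') t := by
      intro t
      simp [expSum, Fin.sum_univ_castSucc, Fin.init, b', β]
    have hb' : Function.Injective (Fin.init b') := fun i j hij =>
      Fin.castSucc_injective n (hb (sub_left_injective hij))
    have hc_init := eq_zero_of_expSum_eq_zero hb' hy_mono fun k => by rw [← hinit, hy0]
    have hc_castSucc : ∀ i : Fin n, c i.castSucc = 0 := fun i => by
      have h := congrFun hc_init i
      simp only [Fin.init, Pi.mul_apply, Pi.zero_apply, b'] at h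
      exact (mul_eq_zero.1 h).resolve_right
        (sub_ne_zero.2 (hb.ne (Fin.castSucc_lt_last i).ne))
    have hc_last : c (Fin.last n) = 0 := by
      have h := hzero (Fin.last n)
      simp only [expSum, Fin.sum_univ_castSucc, hc_castSucc, zero_mul, Finset.sum_const_zero,
        zero_add] at h
      exact (mul_eq_zero.1 h).resolve_right (exp_ne_zero _)
    funext i
    induction i using Fin.lastCases with
    | last => exact hc_last
    | cast i => exact hc_castSucc i

theorem IsPreconnected.forall_pos_of_forall_ne_zero {s : Set ℝ} {f : ℝ → ℝ}
    (hs : IsPreconnected s) (hf : ContinuousOn f s) (hne : ∀ x ∈ s, f x ≠ 0) {a : ℝ}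
    (ha : a ∈ s) (hfa : 0 < f a) : ∀ x ∈ s, 0 < f x := by
  intro x hx
  by_contra! hfx
  obtain ⟨y, hy, hfy⟩ := hs.intermediate_value hx ha hf ⟨hfx, hfa.le⟩
  exact hne y hy hfy

theorem not_strictMonoOn_Ici_of_tendsto {f : ℝ → ℝ} {L a : ℝ} (hf : Tendsto f atTop (𝓝 L))
    (ha : L ≤ f a) : ¬ StrictMonoOn f (Ici a) := by
  intro hmono
  have hlt : f a < f (a + 1) := hmono self_mem_Ici (by simp) (by linarith)
  have hle : f (a + 1) ≤ L := ge_of_tendsto hf <| eventually_atTop.2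
    ⟨a + 1, fun t ht => hmono.monotoneOn (by simp) (by simp; linarith) ht⟩
  linarith

theorem exists_strictMonoOn_Icc_strictAntiOn_Ici {F : ℝ → ℝ} (hF : Differentiable ℝ F)
    (hF' : Differentiable ℝ (deriv F)) (hF'0 : deriv F 0 = 0) (hF''0 : 0 < deriv (deriv F) 0)
    (hlim : Tendsto F atTop (𝓝 (F 0))) (hcrit : (Ioi 0 ∩ {t | deriv F t = 0}).Subsingleton) :
    ∃ t₀, 0 < t₀ ∧ StrictMonoOn F (Icc 0 t₀) ∧ StrictAntiOn F (Ici t₀) := by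
  have hpos : ∀ᶠ t in 𝓝[>] 0, 0 < deriv F t :=
    deriv_pos_right_of_sign_deriv <| nhdsWithin_le_nhds <|
      eventually_nhdsWithin_sign_eq_of_deriv_pos hF''0 hF'0
  have hpos_below : ∀ t₀ > 0, ∃ a ∈ Ioo 0 t₀, 0 < deriv F a := fun t₀ ht₀ =>
    (Filter.Eventually.and (Ioo_mem_nhdsGT ht₀) hpos).exists
  obtain ⟨t₀, ht₀, hcrit₀⟩ : ∃ t₀ > 0, deriv F t₀ = 0 := by
    by_contra! hne
    obtain ⟨a, ha, hFa⟩ := hpos_below 1 one_pos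
    refine not_strictMonoOn_Ici_of_tendsto hlim le_rfl <|
      strictMonoOn_of_deriv_pos (convex_Ici 0) hF.continuous.continuousOn fun x hx => ?_
    rw [interior_Ici] at hx
    exact isPreconnected_Ioi.forall_pos_of_forall_ne_zero hF'.continuous.continuousOn hne
      ha.1 hFa x hx
  have hne : ∀ x ∈ Ioi 0, x ≠ t₀ → deriv F x ≠ 0 := fun x hx hxt hx0 =>
    hxt (hcrit ⟨hx, hx0⟩ ⟨ht₀, hcrit₀⟩)
  have hmono : StrictMonoOn F (Icc 0 t₀) := by
    refine strictMonoOn_of_deriv_pos (convex_Icc 0 t₀) hF.continuous.continuousOn fun x hx => ?_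
    rw [interior_Icc] at hx
    obtain ⟨a, ha, hFa⟩ := hpos_below t₀ ht₀
    exact isPreconnected_Ioo.forall_pos_of_forall_ne_zero hF'.continuous.continuousOn
      (fun y hy => hne y hy.1 hy.2.ne) ha hFa x hx
  refine ⟨t₀, ht₀, hmono, strictAntiOn_of_deriv_neg (convex_Ici t₀)
    hF.continuous.continuousOn fun x hx => ?_⟩
  rw [interior_Ici] at hx
  have hne' : ∀ y ∈ Ioi t₀, deriv F y ≠ 0 := fun y hy => hne y (ht₀.trans hy) hy.ne'
  refine (hne' x hx).lt_of_le (not_lt.1 fun hFx => ?_)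
  refine not_strictMonoOn_Ici_of_tendsto hlim
    (hmono.monotoneOn (left_mem_Icc.2 ht₀.le) (right_mem_Icc.2 ht₀.le) ht₀.le) <|
    strictMonoOn_of_deriv_pos (convex_Ici t₀) hF.continuous.continuousOn fun y hy => ?_
  rw [interior_Ici] at hy
  exact isPreconnected_Ioi.forall_pos_of_forall_ne_zero hF'.continuous.continuousOn hne'
    hx hFx y hy

theorem lt_of_strictMonoOn_Icc_of_strictAntiOn_Ici {f : ℝ → ℝ} {a b t : ℝ} (hab : a ≤ b)
    (hmono : StrictMonoOn f (Icc a b)) (hanti : StrictAntiOn f (Ici b)) (ht : t ∈ Ici a)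
    (htb : t ≠ b) : f t < f b := by
  rcases htb.lt_or_gt with htb | htb
  · exact hmono ⟨ht, htb.le⟩ (right_mem_Icc.2 hab) htb
  · exact hanti self_mem_Ici htb.le htb

theorem exists_strictMonoOn_Icc_strictAntiOn_Ici_expSum {c b : Fin 3 → ℝ}
    (hb : Function.Injective b) (hneg : ∀ i, b i < 0) (h₀ : ∑ i, c i = 0)
    (h₁ : ∑ i, c i * b i = 0) (h₂ : 0 < ∑ i, c i * b i ^ 2) :
    ∃ t₀, 0 < t₀ ∧ StrictMonoOn (expSum c b) (Icc 0 t₀) ∧ StrictAntiOn (expSum c b) (Ici t₀) := by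
  have hval : ∀ d : Fin 3 → ℝ, expSum d b 0 = ∑ i, d i := fun d => by simp [expSum]
  refine exists_strictMonoOn_Icc_strictAntiOn_Ici (differentiable_expSum c b)
    (by rw [deriv_expSum]; exact differentiable_expSum _ b) ?_ ?_ ?_ ?_
  · simpa [deriv_expSum, hval] using h₁
  · simpa [deriv_expSum, hval, sq, mul_assoc] using h₂
  · simpa [hval, h₀] using tendsto_expSum_atTop c hneg
  -- the critical points of `expSum c b`, together with `0`, are zeros of `expSum (c * b) b`
  intro s hs t ht
  by_contra hst
  wlog hlt : s < t generalizing s t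
  · exact this ht hs (Ne.symm hst) ((not_lt.1 hlt).lt_of_ne (Ne.symm hst))
  have hs₀ : 0 < s := hs.1
  have hcb : c * b = 0 := by
    refine eq_zero_of_expSum_eq_zero (x := ![0, s, t]) hb
      (Fin.strictMono_iff_lt_succ.2 fun i => by fin_cases i <;> simp [hs₀, hlt]) fun k => ?_
    rw [← deriv_expSum]
    fin_cases k
    · simpa [deriv_expSum, hval] using h₁
    · exact hs.2
    · exact ht.2
  refine h₂.ne' (Finset.sum_eq_zero fun i _ => ?_)
  simpa [sq, mul_assoc] using congrArg (· * b i) (congrFun hcb i)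

section Cascade

variable {a₁ a₂ a₃ : ℝ} (g₁ g₂ : ℝ)

-- The columns are eigenvectors of `Acas a₁ a₂ a₃ g₁ g₂` for the eigenvalues `-a₁, -a₂, -a₃`.
noncomputable def cascadeEigvecs (a₁ a₂ a₃ g₁ g₂ : ℝ) : Matrix (Fin 3) (Fin 3) ℝ :=
  !![1, 0, 0;
     g₁ / (a₂ - a₁), 1, 0;
     g₁ * g₂ / ((a₂ - a₁) * (a₃ - a₁)), g₂ / (a₃ - a₂), 1]

noncomputable def cascadeEigvecsInv (a₁ a₂ a₃ g₁ g₂ : ℝ) : Matrix (Fin 3) (Fin 3) ℝ :=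
  !![1, 0, 0;
     -(g₁ / (a₂ - a₁)), 1, 0;
     g₁ * g₂ / ((a₃ - a₁) * (a₃ - a₂)), -(g₂ / (a₃ - a₂)), 1]


theorem cascadeEigvecs_mul_inv (h₁₂ : a₁ ≠ a₂) (h₁₃ : a₁ ≠ a₃) (h₂₃ : a₂ ≠ a₃) :
    cascadeEigvecs a₁ a₂ a₃ g₁ g₂ * cascadeEigvecsInv a₁ a₂ a₃ g₁ g₂ = 1 := by
  have := sub_ne_zero.2 h₁₂.symm
  have := sub_ne_zero.2 h₁₃.symm
  have := sub_ne_zero.2 h₂₃.symm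
  ext i j
  fin_cases i <;> fin_cases j <;>
    simp [cascadeEigvecs, cascadeEigvecsInv, Matrix.mul_apply, Fin.sum_univ_three]
  field_simp
  ring

theorem Acas_eq_conj_diagonal (h₁₂ : a₁ ≠ a₂) (h₁₃ : a₁ ≠ a₃) (h₂₃ : a₂ ≠ a₃) :
    Acas a₁ a₂ a₃ g₁ g₂ = cascadeEigvecs a₁ a₂ a₃ g₁ g₂ * diagonal ![-a₁, -a₂, -a₃] *
      cascadeEigvecsInv a₁ a₂ a₃ g₁ g₂ := by
  have := sub_ne_zero.2 h₁₂.symm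
  have := sub_ne_zero.2 h₁₃.symm
  have := sub_ne_zero.2 h₂₃.symm
  ext i j
  simp only [Matrix.mul_apply, Fin.sum_univ_three]
  fin_cases i <;> fin_cases j <;>
    simp [Acas, cascadeEigvecs, cascadeEigvecsInv] <;>
    field_simp <;> ring

theorem exp_smul_Acas (h₁₂ : a₁ ≠ a₂) (h₁₃ : a₁ ≠ a₃) (h₂₃ : a₂ ≠ a₃) (t : ℝ) :
    NormedSpace.exp (t • Acas a₁ a₂ a₃ g₁ g₂) = cascadeEigvecs a₁ a₂ a₃ g₁ g₂ *
      diagonal (fun i => exp (![-a₁, -a₂, -a₃] i * t)) * cascadeEigvecsInv a₁ a₂ a₃ g₁ g₂ := by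
  let U : (Matrix (Fin 3) (Fin 3) ℝ)ˣ := ⟨_, _, cascadeEigvecs_mul_inv g₁ g₂ h₁₂ h₁₃ h₂₃,
    mul_eq_one_comm.1 (cascadeEigvecs_mul_inv g₁ g₂ h₁₂ h₁₃ h₂₃)⟩
  have hconj : t • Acas a₁ a₂ a₃ g₁ g₂ =
      (U : Matrix (Fin 3) (Fin 3) ℝ) * diagonal (t • ![-a₁, -a₂, -a₃]) *
        (↑U⁻¹ : Matrix (Fin 3) (Fin 3) ℝ) := by
    rw [Acas_eq_conj_diagonal g₁ g₂ h₁₂ h₁₃ h₂₃, diagonal_smul, Matrix.mul_smul, Matrix.smul_mul]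
    rfl
  have hdiag :
      NormedSpace.exp (t • ![-a₁, -a₂, -a₃]) = fun i => exp (![-a₁, -a₂, -a₃] i * t) := by
    funext i
    fin_cases i <;> simp [← Real.exp_eq_exp_ℝ, mul_comm]
  rw [hconj, Matrix.exp_units_conj, Matrix.exp_diagonal, hdiag]
  rfl

noncomputable def cascadeCoeff (a₁ a₂ a₃ g₁ g₂ : ℝ) : Fin 3 → ℝ :=
  fun i => cascadeEigvecs a₁ a₂ a₃ g₁ g₂ 2 i * cascadeEigvecsInv a₁ a₂ a₃ g₁ g₂ i 0

theorem impResp_eq_expSum (h₁₂ : a₁ ≠ a₂) (h₁₃ : a₁ ≠ a₃) (h₂₃ : a₂ ≠ a₃) :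
    impResp a₁ a₂ a₃ g₁ g₂ = expSum (cascadeCoeff a₁ a₂ a₃ g₁ g₂) ![-a₁, -a₂, -a₃] := by
  funext t
  simp [impResp, exp_smul_Acas g₁ g₂ h₁₂ h₁₃ h₂₃, expSum, cascadeCoeff, Bcas, Matrix.mulVec,
    dotProduct, Fin.sum_univ_three, Matrix.mul_apply]
  ring

theorem cascadeCoeff_moments (h₁₂ : a₁ ≠ a₂) (h₁₃ : a₁ ≠ a₃) (h₂₃ : a₂ ≠ a₃) :
    ∑ i, cascadeCoeff a₁ a₂ a₃ g₁ g₂ i = 0 ∧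
      ∑ i, cascadeCoeff a₁ a₂ a₃ g₁ g₂ i * ![-a₁, -a₂, -a₃] i = 0 ∧
      ∑ i, cascadeCoeff a₁ a₂ a₃ g₁ g₂ i * ![-a₁, -a₂, -a₃] i ^ 2 = g₁ * g₂ := by
  have := sub_ne_zero.2 h₁₂.symm
  have := sub_ne_zero.2 h₁₃.symm
  have := sub_ne_zero.2 h₂₃.symm
  simp only [cascadeCoeff, cascadeEigvecs, cascadeEigvecsInv, Fin.sum_univ_three]
  refine ⟨?_, ?_, ?_⟩ <;> simp <;> field_simp <;> ring

end Cascade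

theorem impulse_response_unimodal (a₁ a₂ a₃ g₁ g₂ : ℝ)
    (ha₁ : 0 < a₁) (ha₂ : 0 < a₂) (ha₃ : 0 < a₃)
    (h₁₂ : a₁ ≠ a₂) (h₁₃ : a₁ ≠ a₃) (h₂₃ : a₂ ≠ a₃)
    (hg₁ : 0 < g₁) (hg₂ : 0 < g₂) :
    ∃ tstar : ℝ, 0 < tstar ∧
      (∀ t ∈ Set.Ici (0:ℝ), impResp a₁ a₂ a₃ g₁ g₂ t ≤ impResp a₁ a₂ a₃ g₁ g₂ tstar) ∧
      StrictMonoOn (impResp a₁ a₂ a₃ g₁ g₂) (Set.Icc 0 tstar) ∧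
      StrictAntiOn (impResp a₁ a₂ a₃ g₁ g₂) (Set.Ici tstar) ∧
      (∀ t ∈ Set.Ici (0:ℝ),
        (∀ s ∈ Set.Ici (0:ℝ), impResp a₁ a₂ a₃ g₁ g₂ s ≤ impResp a₁ a₂ a₃ g₁ g₂ t) →
        t = tstar) := by
  have hinj : Function.Injective ![-a₁, -a₂, -a₃] := by
    intro i j hij
    fin_cases i <;> fin_cases j <;> simp_all [eq_comm]
  have hneg : ∀ i, ![-a₁, -a₂, -a₃] i < 0 := by
    intro i
    fin_cases i <;> simp [ha₁, ha₂, ha₃]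
  obtain ⟨h₀, h₁, h₂⟩ := cascadeCoeff_moments g₁ g₂ h₁₂ h₁₃ h₂₃
  obtain ⟨t₀, ht₀, hmono, hanti⟩ := exists_strictMonoOn_Icc_strictAntiOn_Ici_expSum hinj hneg
    h₀ h₁ (by rw [h₂]; positivity)
  rw [← impResp_eq_expSum g₁ g₂ h₁₂ h₁₃ h₂₃] at hmono hanti
  have hlt : ∀ t ∈ Ici (0 : ℝ), t ≠ t₀ → impResp a₁ a₂ a₃ g₁ g₂ t < impResp a₁ a₂ a₃ g₁ g₂ t₀ :=
    fun t ht htne => lt_of_strictMonoOn_Icc_of_strictAntiOn_Ici ht₀.le hmono hanti ht htne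
  refine ⟨t₀, ht₀, fun t ht => ?_, hmono, hanti, fun t ht hmax => ?_⟩
  · rcases eq_or_ne t t₀ with rfl | htne
    exacts [le_rfl, (hlt t ht htne).le]
  · by_contra htne
    exact (hlt t ht htne).not_ge (hmax t₀ ht₀.le)
end

section
/- For the cascade system above, the impulse response g(t) = C e^{tA} B is strictly positive for all t > 0. -/
open Matrix Set Filter

/-! A cascade matrix is Metzler: for `c ≥ aᵢ`, `N = A + c • 1` is entrywise nonnegative and
`e^{tA} = e^{-ct} e^{tN}`. The exponential series of the nonnegative matrix `tN` dominates each of its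
terms, so `(e^{tN})₃₁ ≥ t² (N²)₃₁ / 2 = t² g₁ g₂ / 2 > 0`. -/

open NormedSpace
open scoped Nat

namespace Matrix

variable {n : Type*} [Fintype n] [DecidableEq n]

theorem hasSum_exp_apply (M : Matrix n n ℝ) (i j : n) :
    HasSum (fun k => (M ^ k) i j / k !) (exp M i j) := by
  have h := open scoped Norms.Operator in exp_series_hasSum_exp' (𝕂 := ℝ) M
  simp only [div_eq_inv_mul]
  -- the operator norm induces the product topology definitionally, so `h` is a `HasSum` in `Pi`
  exact Pi.hasSum.mp (Pi.hasSum.mp h i) j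

theorem pow_apply_div_factorial_le_exp_apply {M : Matrix n n ℝ} (hM : ∀ i j, 0 ≤ M i j)
    (k : ℕ) (i j : n) : (M ^ k) i j / k ! ≤ exp M i j :=
  le_hasSum (hasSum_exp_apply M i j) k fun l _ => by
    have := pow_apply_nonneg hM l i j
    positivity

theorem exp_apply_pos_of_pow_apply_pos {M : Matrix n n ℝ} (hM : ∀ i j, 0 ≤ M i j) {k : ℕ}
    {i j : n} (hk : 0 < (M ^ k) i j) : 0 < exp M i j :=
  (div_pos hk (by positivity)).trans_le (pow_apply_div_factorial_le_exp_apply hM k i j)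

theorem exp_algebraMap (x : ℝ) :
    exp (algebraMap ℝ (Matrix n n ℝ) x) = algebraMap ℝ (Matrix n n ℝ) (Real.exp x) := by
  rw [Real.exp_eq_exp_ℝ]
  exact (open scoped Norms.Operator in algebraMap_exp_comm (𝔸 := Matrix n n ℝ) x).symm

theorem exp_eq_exp_neg_smul_exp_add_smul_one (A : Matrix n n ℝ) (c : ℝ) :
    exp A = Real.exp (-c) • exp (A + c • 1) := by
  have hcomm : Commute (algebraMap ℝ (Matrix n n ℝ) (-c)) (A + c • 1) := Algebra.commutes _ _
  rw [Algebra.smul_def, ← exp_algebraMap, ← exp_add_of_commute _ _ hcomm,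
    Algebra.algebraMap_eq_smul_one]
  congr 1
  module

theorem exp_smul_apply_pos {A : Matrix n n ℝ} {c t : ℝ} (hA : ∀ i j, 0 ≤ (A + c • 1) i j)
    (ht : 0 < t) {k : ℕ} {i j : n} (hk : 0 < ((A + c • 1) ^ k) i j) : 0 < exp (t • A) i j := by
  have hshift : t • A + (t * c) • 1 = t • (A + c • 1) := by module
  rw [exp_eq_exp_neg_smul_exp_add_smul_one _ (t * c), hshift, smul_apply, smul_eq_mul]
  refine mul_pos (Real.exp_pos _) (exp_apply_pos_of_pow_apply_pos (k := k) (fun i j => ?_) ?_)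
  · exact mul_nonneg ht.le (hA i j)
  · rw [smul_pow, smul_apply, smul_eq_mul]
    exact mul_pos (pow_pos ht k) hk

end Matrix

theorem Acas_add_smul_one_nonneg {a₁ a₂ a₃ g₁ g₂ c : ℝ} (h₁ : a₁ ≤ c) (h₂ : a₂ ≤ c) (h₃ : a₃ ≤ c)
    (hg₁ : 0 ≤ g₁) (hg₂ : 0 ≤ g₂) (i j : Fin 3) : 0 ≤ (Acas a₁ a₂ a₃ g₁ g₂ + c • 1) i j := by
  fin_cases i <;> fin_cases j <;> simp [Acas, one_apply] <;> linarith

theorem Acas_add_smul_one_sq_apply (a₁ a₂ a₃ g₁ g₂ c : ℝ) :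
    ((Acas a₁ a₂ a₃ g₁ g₂ + c • 1) ^ 2 : Matrix (Fin 3) (Fin 3) ℝ) 2 0 = g₂ * g₁ := by
  simp [sq, Acas, mul_apply, Fin.sum_univ_three, one_apply]

theorem impResp_eq_exp_apply (a₁ a₂ a₃ g₁ g₂ t : ℝ) :
    impResp a₁ a₂ a₃ g₁ g₂ t = exp (t • Acas a₁ a₂ a₃ g₁ g₂) 2 0 := by
  simp [impResp, Bcas, mulVec, dotProduct, Fin.sum_univ_three]

theorem impulse_response_pos_general (a₁ a₂ a₃ g₁ g₂ : ℝ)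
    (hg₁ : 0 < g₁) (hg₂ : 0 < g₂) :
    ∀ t : ℝ, 0 < t → 0 < impResp a₁ a₂ a₃ g₁ g₂ t := by
  intro t ht
  have hc₁ : a₁ ≤ max a₁ (max a₂ a₃) := le_max_left _ _
  have hc₂ : a₂ ≤ max a₁ (max a₂ a₃) := (le_max_left _ _).trans (le_max_right _ _)
  have hc₃ : a₃ ≤ max a₁ (max a₂ a₃) := (le_max_right _ _).trans (le_max_right _ _)
  rw [impResp_eq_exp_apply]
  refine exp_smul_apply_pos (Acas_add_smul_one_nonneg hc₁ hc₂ hc₃ hg₁.le hg₂.le) ht (k := 2) ?_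
  rw [Acas_add_smul_one_sq_apply]
  exact mul_pos hg₂ hg₁

theorem impulse_response_pos (a₁ a₂ a₃ g₁ g₂ : ℝ)
    (ha₁ : 0 < a₁) (ha₂ : 0 < a₂) (ha₃ : 0 < a₃)
    (h₁₂ : a₁ ≠ a₂) (h₁₃ : a₁ ≠ a₃) (h₂₃ : a₂ ≠ a₃)
    (hg₁ : 0 < g₁) (hg₂ : 0 < g₂) :
    ∀ t : ℝ, 0 < t → 0 < impResp a₁ a₂ a₃ g₁ g₂ t :=
  impulse_response_pos_general a₁ a₂ a₃ g₁ g₂ hg₁ hg₂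
end

section
/- The fixed point X = λ(e^{-AT} - I)^{-1}B of the 1-cycle map has explicit coordinates X₁ = λ μ(-a₁T), X₂ = λ g₁ T μ[-a₁T, -a₂T], X₃ = λ g₁ g₂ T² μ[-a₁T, -a₂T, -a₃T], where μ(s) = e^{s}/(1 - e^{s}) (so that (e^{-AT}-I)^{-1} is computed via the Opitz formula), and μ[·,·], μ[·,·,·] denote first and second divided differences of μ. -/
open Matrix Set Filter

/-- first divided difference -/
noncomputable def dd1 (f : ℝ → ℝ) (x y : ℝ) : ℝ := (f y - f x) / (y - x)

/-- second divided difference -/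
noncomputable def dd2 (f : ℝ → ℝ) (x y z : ℝ) : ℝ := (dd1 f y z - dd1 f x y) / (z - x)

/-- μ(s) = 1/(e^{-s}-1) -/
noncomputable def muF (s : ℝ) : ℝ := 1 / (Real.exp (-s) - 1)

set_option maxHeartbeats 1000000 in
theorem fixed_point_coordinates (a₁ a₂ a₃ g₁ g₂ : ℝ)
    (ha₁ : 0 < a₁) (ha₂ : 0 < a₂) (ha₃ : 0 < a₃)
    (h₁₂ : a₁ ≠ a₂) (h₁₃ : a₁ ≠ a₃) (h₂₃ : a₂ ≠ a₃)
    (hg₁ : 0 < g₁) (hg₂ : 0 < g₂) (T lam : ℝ) (hT : 0 < T) (hlam : 0 < lam) :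
    (lam • (((NormedSpace.exp ((-T) • Acas a₁ a₂ a₃ g₁ g₂) - 1)⁻¹) *ᵥ Bcas)) 0
        = lam * muF (-(a₁ * T)) ∧
    (lam • (((NormedSpace.exp ((-T) • Acas a₁ a₂ a₃ g₁ g₂) - 1)⁻¹) *ᵥ Bcas)) 1
        = lam * g₁ * T * dd1 muF (-(a₁ * T)) (-(a₂ * T)) ∧
    (lam • (((NormedSpace.exp ((-T) • Acas a₁ a₂ a₃ g₁ g₂) - 1)⁻¹) *ᵥ Bcas)) 2
        = lam * g₁ * g₂ * T ^ 2 * dd2 muF (-(a₁ * T)) (-(a₂ * T)) (-(a₃ * T)) := by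
  have hT' : T ≠ 0 := ne_of_gt hT
  have h21 : a₂ - a₁ ≠ 0 := sub_ne_zero.mpr (Ne.symm h₁₂)
  have h31 : a₃ - a₁ ≠ 0 := sub_ne_zero.mpr (Ne.symm h₁₃)
  have h32 : a₃ - a₂ ≠ 0 := sub_ne_zero.mpr (Ne.symm h₂₃)
  set c₁ : ℝ := g₁ / (a₂ - a₁) with hc₁
  set c₂ : ℝ := g₁ * g₂ / ((a₂ - a₁) * (a₃ - a₁)) with hc₂
  set c₃ : ℝ := g₂ / (a₃ - a₂) with hc₃
  set P : Matrix (Fin 3) (Fin 3) ℝ := !![1,0,0; c₁,1,0; c₂,c₃,1] with hP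
  set Q : Matrix (Fin 3) (Fin 3) ℝ := !![1,0,0; -c₁,1,0; c₁*c₃-c₂, -c₃, 1] with hQ
  have hPQ : P * Q = 1 := by
    ext i j
    fin_cases i <;> fin_cases j <;>
      simp [hP, hQ, Matrix.mul_apply, Fin.sum_univ_three, Matrix.one_apply] <;> ring
  have hQP : Q * P = 1 := by
    ext i j
    fin_cases i <;> fin_cases j <;>
      simp [hP, hQ, Matrix.mul_apply, Fin.sum_univ_three, Matrix.one_apply] <;> ring
  have hDex : Matrix.diagonal ![a₁*T, a₂*T, a₃*T] = !![a₁*T,0,0; 0,a₂*T,0; 0,0,a₃*T] := by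
    ext i j
    fin_cases i <;> fin_cases j <;>
      simp [Matrix.diagonal, Matrix.vecHead, Matrix.vecTail]
  have hM : (-T) • Acas a₁ a₂ a₃ g₁ g₂ = P * Matrix.diagonal ![a₁*T, a₂*T, a₃*T] * Q := by
    rw [hDex]
    ext i j
    fin_cases i <;> fin_cases j <;>
      (try simp [hP, hQ, Acas, Matrix.mul_apply, Fin.sum_univ_three, hc₁, hc₂, hc₃]) <;>
      (try field_simp) <;> (try ring)
  set U : (Matrix (Fin 3) (Fin 3) ℝ)ˣ := ⟨P, Q, hPQ, hQP⟩ with hU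
  have hexp : NormedSpace.exp ((-T) • Acas a₁ a₂ a₃ g₁ g₂)
      = P * Matrix.diagonal ![Real.exp (a₁*T), Real.exp (a₂*T), Real.exp (a₃*T)] * Q := by
    rw [hM]
    have h1 : P * Matrix.diagonal ![a₁*T, a₂*T, a₃*T] * Q
        = (U : Matrix (Fin 3) (Fin 3) ℝ) * Matrix.diagonal ![a₁*T, a₂*T, a₃*T] *
          ((U⁻¹ : _ˣ) : Matrix (Fin 3) (Fin 3) ℝ) := rfl
    rw [h1, Matrix.exp_units_conj, Matrix.exp_diagonal]
    have h2 : (NormedSpace.exp (![a₁*T, a₂*T, a₃*T]) : Fin 3 → ℝ)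
        = ![Real.exp (a₁*T), Real.exp (a₂*T), Real.exp (a₃*T)] := by
      funext i
      rw [Pi.coe_exp]
      fin_cases i <;> simp [Real.exp_eq_exp_ℝ]
    rw [h2]
    rfl
  set e₁ : ℝ := Real.exp (a₁*T) with he₁
  set e₂ : ℝ := Real.exp (a₂*T) with he₂
  set e₃ : ℝ := Real.exp (a₃*T) with he₃
  have hd₁ : e₁ - 1 ≠ 0 := sub_ne_zero.mpr (ne_of_gt (Real.one_lt_exp_iff.mpr (by positivity)))
  have hd₂ : e₂ - 1 ≠ 0 := sub_ne_zero.mpr (ne_of_gt (Real.one_lt_exp_iff.mpr (by positivity)))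
  have hd₃ : e₃ - 1 ≠ 0 := sub_ne_zero.mpr (ne_of_gt (Real.one_lt_exp_iff.mpr (by positivity)))
  set F : Matrix (Fin 3) (Fin 3) ℝ :=
    P * Matrix.diagonal ![(e₁-1)⁻¹, (e₂-1)⁻¹, (e₃-1)⁻¹] * Q with hF
  have hE3ex : Matrix.diagonal ![e₁, e₂, e₃] = !![e₁,0,0; 0,e₂,0; 0,0,e₃] := by
    ext i j
    fin_cases i <;> fin_cases j <;>
      simp [Matrix.diagonal, Matrix.vecHead, Matrix.vecTail]
  have hE4ex : Matrix.diagonal ![e₁-1, e₂-1, e₃-1] = !![e₁-1,0,0; 0,e₂-1,0; 0,0,e₃-1] := by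
    ext i j
    fin_cases i <;> fin_cases j <;>
      simp [Matrix.diagonal, Matrix.vecHead, Matrix.vecTail]
  have key2 : Matrix.diagonal ![e₁, e₂, e₃] - 1 = Matrix.diagonal ![e₁-1, e₂-1, e₃-1] := by
    rw [hE3ex, hE4ex]
    ext i j
    fin_cases i <;> fin_cases j <;> simp [Matrix.one_apply]
  have key : P * (Matrix.diagonal ![e₁, e₂, e₃] - 1) * Q
      = P * Matrix.diagonal ![e₁, e₂, e₃] * Q - 1 := by
    rw [Matrix.mul_sub, mul_one, Matrix.sub_mul, hPQ]
  have hEm : NormedSpace.exp ((-T) • Acas a₁ a₂ a₃ g₁ g₂) - 1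
      = P * Matrix.diagonal ![e₁-1, e₂-1, e₃-1] * Q := by
    rw [hexp, ← key2, key]
  have hright : (NormedSpace.exp ((-T) • Acas a₁ a₂ a₃ g₁ g₂) - 1) * F = 1 := by
    rw [hEm, hF]
    calc P * Matrix.diagonal ![e₁-1, e₂-1, e₃-1] * Q *
          (P * Matrix.diagonal ![(e₁-1)⁻¹, (e₂-1)⁻¹, (e₃-1)⁻¹] * Q)
        = P * Matrix.diagonal ![e₁-1, e₂-1, e₃-1] * (Q * P) *
            Matrix.diagonal ![(e₁-1)⁻¹, (e₂-1)⁻¹, (e₃-1)⁻¹] * Q := by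
          simp only [Matrix.mul_assoc]
      _ = P * (Matrix.diagonal ![e₁-1, e₂-1, e₃-1] *
            Matrix.diagonal ![(e₁-1)⁻¹, (e₂-1)⁻¹, (e₃-1)⁻¹]) * Q := by
          rw [hQP, mul_one]; simp only [Matrix.mul_assoc]
      _ = P * Q := by
          rw [Matrix.diagonal_mul_diagonal]
          have h3 : (fun i => ![e₁-1, e₂-1, e₃-1] i * ![(e₁-1)⁻¹, (e₂-1)⁻¹, (e₃-1)⁻¹] i)
              = fun _ => (1:ℝ) := by
            funext i; fin_cases i <;> simp <;> field_simp
          rw [h3, Matrix.diagonal_one, mul_one]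
      _ = 1 := hPQ
  have hinv : (NormedSpace.exp ((-T) • Acas a₁ a₂ a₃ g₁ g₂) - 1)⁻¹ = F :=
    Matrix.inv_eq_right_inv hright
  rw [hinv]
  have hGex : Matrix.diagonal ![(e₁-1)⁻¹, (e₂-1)⁻¹, (e₃-1)⁻¹]
      = !![(e₁-1)⁻¹,0,0; 0,(e₂-1)⁻¹,0; 0,0,(e₃-1)⁻¹] := by
    ext i j
    fin_cases i <;> fin_cases j <;>
      simp [Matrix.diagonal, Matrix.vecHead, Matrix.vecTail]
  have hv : ∀ k, (F *ᵥ Bcas) k = (P *ᵥ ![(e₁-1)⁻¹, -c₁*(e₂-1)⁻¹, (c₁*c₃-c₂)*(e₃-1)⁻¹]) k := by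
    intro k
    rw [hF, hGex]
    fin_cases k <;>
      (try simp [hP, hQ, Bcas, Matrix.mulVec, Matrix.mul_apply, dotProduct,
        Fin.sum_univ_three]) <;> ring
  have n21 : (a₁-a₂)*T ≠ 0 := mul_ne_zero (sub_ne_zero.mpr h₁₂) hT'
  have n32 : (a₂-a₃)*T ≠ 0 := mul_ne_zero (sub_ne_zero.mpr h₂₃) hT'
  have n31 : (a₁-a₃)*T ≠ 0 := mul_ne_zero (sub_ne_zero.mpr h₁₃) hT'
  refine ⟨?_, ?_, ?_⟩
  · rw [Pi.smul_apply, hv 0]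
    simp only [hP, Matrix.mulVec, dotProduct, Fin.sum_univ_three, smul_eq_mul]
    simp [muF, neg_neg]
    exact Or.inl he₁
  · rw [Pi.smul_apply, hv 1]
    simp only [hP, Matrix.mulVec, dotProduct, Fin.sum_univ_three, Matrix.cons_val',
      Matrix.cons_val_zero, Matrix.cons_val_one, Matrix.cons_val_two, Matrix.head_cons,
      Matrix.tail_cons, Matrix.vecHead, Matrix.vecTail, Matrix.empty_val',
      Matrix.cons_val_fin_one, Matrix.of_apply, Function.comp_apply, smul_eq_mul,
      Matrix.cons_val_succ]
    simp only [dd1, muF, neg_neg]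
    rw [show -(a₂*T) - -(a₁*T) = -((a₂-a₁)*T) from by ring, ← he₁, ← he₂, hc₁]
    field_simp
    ring
  · rw [Pi.smul_apply, hv 2]
    simp only [hP, Matrix.mulVec, dotProduct, Fin.sum_univ_three, Matrix.cons_val',
      Matrix.cons_val_zero, Matrix.cons_val_one, Matrix.cons_val_two, Matrix.head_cons,
      Matrix.tail_cons, Matrix.vecHead, Matrix.vecTail, Matrix.empty_val',
      Matrix.cons_val_fin_one, Matrix.of_apply, Function.comp_apply, smul_eq_mul,
      Matrix.cons_val_succ]
    simp only [dd2, dd1, muF, neg_neg]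
    rw [show -(a₂*T) - -(a₁*T) = -((a₂-a₁)*T) from by ring,
        show -(a₃*T) - -(a₂*T) = -((a₃-a₂)*T) from by ring,
        show -(a₃*T) - -(a₁*T) = -((a₃-a₁)*T) from by ring, ← he₁, ← he₂, ← he₃,
        hc₁, hc₂, hc₃]
    field_simp
    ring
end

section
/- As T → 0⁺, z_max(T) → +∞, z_min(T) → +∞, while the difference z_max(T) - z_min(T) remains bounded. -/
/-!
Write `R(T) = (1 - e^{TA})⁻¹`. Since `(1 - e^{TA}) / T → -A` and inversion is continuous at the
invertible matrix `-A`, `T • R(T) → (-A)⁻¹`; hence `z(0, T) = (R(T) B)₃ ~ -(A⁻¹ B)₃ / T`, and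
`-(A⁻¹ B)₃ = g₁ g₂ / (a₁ a₂ a₃) > 0` gives `z(0, T) → ∞`. On the other hand
`z(τ, T) - z(0, T) = ((e^{τA} - 1) R(T) B)₃` with `‖e^{τA} - 1‖ = O(τ) = O(T)` and
`‖R(T)‖ = O(1 / T)`, so `z(·, T)` stays within a bounded distance of `z(0, T)` on `[0, T]`;
both its maximum and its minimum therefore follow `z(0, T)` to infinity.
-/

open Matrix Set Filter

open NormedSpace
open scoped Topology

theorem Ring.inverse_smul {𝕜 𝔸 : Type*} [Field 𝕜] [Ring 𝔸] [Algebra 𝕜 𝔸] {c : 𝕜} (hc : c ≠ 0)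
    (x : 𝔸) :
    Ring.inverse (c • x) = c⁻¹ • Ring.inverse x := by
  have hunit : IsUnit (algebraMap 𝕜 𝔸 c) := (IsUnit.mk0 c hc).map _
  have hinv : Ring.inverse (algebraMap 𝕜 𝔸 c) = algebraMap 𝕜 𝔸 c⁻¹ := by
    rw [← mul_one (Ring.inverse _), Ring.inverse_mul_eq_iff_eq_mul _ _ _ hunit, ← map_mul,
      mul_inv_cancel₀ hc, map_one]
  rw [Algebra.smul_def, Ring.inverse_mul (.inl hunit), hinv, ← Algebra.commutes,
    ← Algebra.smul_def]

section BanachAlgebra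

variable {𝕂 𝔸 : Type*} [RCLike 𝕂] [NormedRing 𝔸] [NormedAlgebra 𝕂 𝔸] [CompleteSpace 𝔸]

theorem tendsto_smul_ringInverse_one_sub_exp_smul {a : 𝔸} (ha : IsUnit a) :
    Tendsto (fun t : 𝕂 => t • Ring.inverse (1 - exp (t • a))) (𝓝[≠] 0)
      (𝓝 (Ring.inverse (-a))) := by
  have hderiv : HasDerivAt (fun t : 𝕂 => 1 - exp (t • a)) (-a) 0 := by
    simpa using (hasDerivAt_exp_smul_const' (𝕂 := 𝕂) a 0).const_sub 1
  refine ((NormedRing.inverse_continuousAt ha.neg.unit).tendsto.comp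
    (hasDerivAt_iff_tendsto_slope.mp hderiv)).congr' ?_
  filter_upwards [self_mem_nhdsWithin] with t ht
  simp [slope_def_module, Ring.inverse_smul (inv_ne_zero ht)]

theorem exists_pos_norm_exp_smul_sub_one_le (a : 𝔸) :
    ∃ c > 0, ∀ᶠ t in 𝓝 (0 : 𝕂), ‖exp (t • a) - 1‖ ≤ c * ‖t‖ := by
  obtain ⟨c, hc, hO⟩ := (hasDerivAt_exp_smul_const' (𝕂 := 𝕂) a 0).isBigO_sub.exists_pos
  exact ⟨c, hc, by simpa using hO.bound⟩

end BanachAlgebra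

section RealBanachAlgebra

variable {𝔸 : Type*} [NormedRing 𝔸] [NormedAlgebra ℝ 𝔸] [CompleteSpace 𝔸]

theorem exists_norm_exp_smul_mul_ringInverse_sub_le {a : 𝔸} (ha : IsUnit a) :
    ∃ K, ∀ᶠ T in 𝓝[>] (0 : ℝ), ∀ τ ∈ Icc 0 T,
      ‖exp (τ • a) * Ring.inverse (1 - exp (T • a)) - Ring.inverse (1 - exp (T • a))‖ ≤ K := by
  obtain ⟨c, hc, hexp⟩ := exists_pos_norm_exp_smul_sub_one_le (𝕂 := ℝ) a
  obtain ⟨ε, hε, hball⟩ := Metric.eventually_nhds_iff_ball.mp hexp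
  have hbdd : ∀ᶠ T in 𝓝[>] (0 : ℝ),
      ‖T • Ring.inverse (1 - exp (T • a))‖ < ‖Ring.inverse (-a)‖ + 1 :=
    ((tendsto_smul_ringInverse_one_sub_exp_smul ha).norm.mono_left
      (nhdsWithin_mono _ fun _ h => ne_of_gt h)).eventually (gt_mem_nhds (lt_add_one _))
  refine ⟨c * (‖Ring.inverse (-a)‖ + 1), ?_⟩
  filter_upwards [hbdd, self_mem_nhdsWithin, nhdsWithin_le_nhds (Iio_mem_nhds hε)]
    with T hT (hT0 : 0 < T) (hTε : T < ε) τ ⟨hτ0, hτT⟩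
  set R := Ring.inverse (1 - exp (T • a))
  have hτ : ‖exp (τ • a) - 1‖ ≤ c * T := by
    calc ‖exp (τ • a) - 1‖ ≤ c * ‖τ‖ := hball τ (by simp [abs_of_nonneg hτ0]; linarith)
      _ ≤ c * T := by gcongr; rwa [Real.norm_of_nonneg hτ0]
  calc ‖exp (τ • a) * R - R‖ = ‖(exp (τ • a) - 1) * R‖ := by rw [sub_one_mul]
    _ ≤ c * T * ‖R‖ := (norm_mul_le _ _).trans (by gcongr)
    _ = c * ‖T • R‖ := by rw [norm_smul, Real.norm_of_nonneg hT0.le, mul_assoc]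
    _ ≤ c * (‖Ring.inverse (-a)‖ + 1) := by gcongr

end RealBanachAlgebra

theorem csSup_csInf_bounds_of_subset_Icc {S : Set ℝ} {x K : ℝ} (hx : x ∈ S)
    (hS : S ⊆ Icc (x - K) (x + K)) :
    x ≤ sSup S ∧ sSup S ≤ x + K ∧ x - K ≤ sInf S :=
  ⟨le_csSup ⟨x + K, fun _ hy => (hS hy).2⟩ hx, csSup_le ⟨x, hx⟩ fun _ hy => (hS hy).2,
    le_csInf ⟨x, hx⟩ fun _ hy => (hS hy).1⟩

theorem tendsto_extrema_of_abs_sub_le {z : ℝ → ℝ → ℝ} {l : Filter ℝ} {K : ℝ}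
    (hz : Tendsto (z 0) l atTop) (hnonneg : ∀ᶠ T in l, 0 ≤ T)
    (hosc : ∀ᶠ T in l, ∀ τ ∈ Icc 0 T, |z τ T - z 0 T| ≤ K) :
    Tendsto (fun T => sSup ((z · T) '' Icc 0 T)) l atTop ∧
      Tendsto (fun T => sInf ((z · T) '' Icc 0 T)) l atTop ∧
      ∀ᶠ T in l, sSup ((z · T) '' Icc 0 T) - sInf ((z · T) '' Icc 0 T) ≤ 2 * K := by
  have hbounds : ∀ᶠ T in l, z 0 T ≤ sSup ((z · T) '' Icc 0 T) ∧
      sSup ((z · T) '' Icc 0 T) ≤ z 0 T + K ∧ z 0 T - K ≤ sInf ((z · T) '' Icc 0 T) := by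
    filter_upwards [hnonneg, hosc] with T hT hK
    refine csSup_csInf_bounds_of_subset_Icc ⟨0, ⟨le_rfl, hT⟩, rfl⟩ ?_
    rintro _ ⟨τ, hτ, rfl⟩
    have := abs_sub_le_iff.mp (hK τ hτ)
    constructor <;> linarith
  refine ⟨tendsto_atTop_mono' l (hbounds.mono fun _ h => h.1) hz,
    tendsto_atTop_mono' l (hbounds.mono fun _ h => h.2.2)
      (tendsto_atTop_add_const_right l (-K) hz), ?_⟩
  filter_upwards [hbounds] with T h
  linarith [h.2.1, h.2.2]

theorem Matrix.tendsto_smul_inv_one_sub_exp_smul {𝕂 n : Type*} [RCLike 𝕂] [Fintype n]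
    [DecidableEq n] {A : Matrix n n 𝕂} (hA : IsUnit A) :
    Tendsto (fun t : 𝕂 => t • (1 - exp (t • A))⁻¹) (𝓝[≠] 0) (𝓝 (-A)⁻¹) := by
  simp only [nonsing_inv_eq_ringInverse]
  open scoped Matrix.Norms.Operator in exact tendsto_smul_ringInverse_one_sub_exp_smul hA

section Cascade

variable {a₁ a₂ a₃ : ℝ} (g₁ g₂ : ℝ)

theorem isUnit_Acas (ha₁ : a₁ ≠ 0) (ha₂ : a₂ ≠ 0) (ha₃ : a₃ ≠ 0) :
    IsUnit (Acas a₁ a₂ a₃ g₁ g₂) := by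
  rw [Matrix.isUnit_iff_isUnit_det, isUnit_iff_ne_zero]
  simp [Acas, Matrix.det_fin_three, ha₁, ha₂, ha₃]

theorem neg_Acas_inv_mulVec_Bcas (ha₁ : a₁ ≠ 0) (ha₂ : a₂ ≠ 0) (ha₃ : a₃ ≠ 0) :
    (-Acas a₁ a₂ a₃ g₁ g₂)⁻¹ *ᵥ Bcas = ![1 / a₁, g₁ / (a₁ * a₂), g₁ * g₂ / (a₁ * a₂ * a₃)] := by
  have hsol : (-Acas a₁ a₂ a₃ g₁ g₂) *ᵥ ![1 / a₁, g₁ / (a₁ * a₂), g₁ * g₂ / (a₁ * a₂ * a₃)] =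
      Bcas := by
    ext i; fin_cases i <;> simp [Acas, Bcas, Matrix.mulVec, dotProduct, Fin.sum_univ_three] <;>
      field_simp <;> ring
  rw [← hsol, mulVec_mulVec,
    nonsing_inv_mul _ ((isUnit_iff_isUnit_det _).mp (isUnit_Acas g₁ g₂ ha₁ ha₂ ha₃).neg),
    one_mulVec]

theorem tendsto_mul_zfun_zero (ha₁ : a₁ ≠ 0) (ha₂ : a₂ ≠ 0) (ha₃ : a₃ ≠ 0) :
    Tendsto (fun T => T * zfun a₁ a₂ a₃ g₁ g₂ 0 T) (𝓝[≠] 0)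
      (𝓝 (g₁ * g₂ / (a₁ * a₂ * a₃))) := by
  have hcont : Continuous fun M : Matrix (Fin 3) (Fin 3) ℝ => (M *ᵥ Bcas) 2 := by fun_prop
  have h := (hcont.tendsto _).comp
    (Matrix.tendsto_smul_inv_one_sub_exp_smul (isUnit_Acas g₁ g₂ ha₁ ha₂ ha₃))
  rw [neg_Acas_inv_mulVec_Bcas g₁ g₂ ha₁ ha₂ ha₃] at h
  refine h.congr fun T => ?_
  simp only [zfun, zero_smul, exp_zero, one_mul, Function.comp_apply, smul_mulVec, Pi.smul_apply,
    smul_eq_mul]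

theorem tendsto_zfun_zero_atTop (ha₁ : a₁ ≠ 0) (ha₂ : a₂ ≠ 0) (ha₃ : a₃ ≠ 0)
    (hpos : 0 < g₁ * g₂ / (a₁ * a₂ * a₃)) :
    Tendsto (zfun a₁ a₂ a₃ g₁ g₂ 0) (𝓝[>] 0) atTop := by
  have h := (tendsto_mul_zfun_zero g₁ g₂ ha₁ ha₂ ha₃).mono_left
    (nhdsWithin_mono _ fun _ h => ne_of_gt h)
  refine (h.pos_mul_atTop hpos tendsto_inv_nhdsGT_zero).congr' ?_
  filter_upwards [self_mem_nhdsWithin] with T (hT : 0 < T)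
  field_simp

open scoped Matrix.Norms.Operator in
theorem exists_abs_zfun_sub_le (ha₁ : a₁ ≠ 0) (ha₂ : a₂ ≠ 0) (ha₃ : a₃ ≠ 0) :
    ∃ K, ∀ᶠ T in 𝓝[>] 0, ∀ τ ∈ Icc 0 T,
      |zfun a₁ a₂ a₃ g₁ g₂ τ T - zfun a₁ a₂ a₃ g₁ g₂ 0 T| ≤ K := by
  set A := Acas a₁ a₂ a₃ g₁ g₂
  obtain ⟨K, hK⟩ := exists_norm_exp_smul_mul_ringInverse_sub_le (isUnit_Acas g₁ g₂ ha₁ ha₂ ha₃)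
  refine ⟨K * ‖Bcas‖, ?_⟩
  filter_upwards [hK] with T hT τ hτ
  set R := Ring.inverse (1 - exp (T • A))
  have hdiff : zfun a₁ a₂ a₃ g₁ g₂ τ T - zfun a₁ a₂ a₃ g₁ g₂ 0 T =
      ((exp (τ • A) * R - R) *ᵥ Bcas) 2 := by
    simp only [zfun, nonsing_inv_eq_ringInverse, zero_smul, exp_zero, one_mul, sub_mulVec,
      Pi.sub_apply, A, R]
  calc |zfun a₁ a₂ a₃ g₁ g₂ τ T - zfun a₁ a₂ a₃ g₁ g₂ 0 T|
      ≤ ‖(exp (τ • A) * R - R) *ᵥ Bcas‖ := by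
        rw [hdiff, ← Real.norm_eq_abs]; exact norm_le_pi_norm _ 2
    _ ≤ ‖exp (τ • A) * R - R‖ * ‖Bcas‖ := linfty_opNorm_mulVec _ _
    _ ≤ K * ‖Bcas‖ := by gcongr; exact hT τ hτ

end Cascade

theorem z_limits_at_zero_general (a₁ a₂ a₃ g₁ g₂ : ℝ)
    (ha₁ : 0 < a₁) (ha₂ : 0 < a₂) (ha₃ : 0 < a₃)
    (hg₁ : 0 < g₁) (hg₂ : 0 < g₂) :
    Filter.Tendsto (zmaxF a₁ a₂ a₃ g₁ g₂) (nhdsWithin 0 (Set.Ioi 0)) Filter.atTop ∧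
    Filter.Tendsto (zminF a₁ a₂ a₃ g₁ g₂) (nhdsWithin 0 (Set.Ioi 0)) Filter.atTop ∧
    ∃ Cb : ℝ, ∀ᶠ T in nhdsWithin (0:ℝ) (Set.Ioi 0),
      zmaxF a₁ a₂ a₃ g₁ g₂ T - zminF a₁ a₂ a₃ g₁ g₂ T ≤ Cb := by
  obtain ⟨K, hK⟩ := exists_abs_zfun_sub_le g₁ g₂ ha₁.ne' ha₂.ne' ha₃.ne'
  obtain ⟨hmax, hmin, hdiff⟩ := tendsto_extrema_of_abs_sub_le
    (tendsto_zfun_zero_atTop g₁ g₂ ha₁.ne' ha₂.ne' ha₃.ne' (by positivity))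
    (eventually_mem_nhdsWithin.mono fun _ hT => le_of_lt hT) hK
  exact ⟨hmax, hmin, 2 * K, hdiff⟩

theorem z_limits_at_zero (a₁ a₂ a₃ g₁ g₂ : ℝ)
    (ha₁ : 0 < a₁) (ha₂ : 0 < a₂) (ha₃ : 0 < a₃)
    (h₁₂ : a₁ ≠ a₂) (h₁₃ : a₁ ≠ a₃) (h₂₃ : a₂ ≠ a₃)
    (hg₁ : 0 < g₁) (hg₂ : 0 < g₂) :
    Filter.Tendsto (zmaxF a₁ a₂ a₃ g₁ g₂) (nhdsWithin 0 (Set.Ioi 0)) Filter.atTop ∧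
    Filter.Tendsto (zminF a₁ a₂ a₃ g₁ g₂) (nhdsWithin 0 (Set.Ioi 0)) Filter.atTop ∧
    ∃ Cb : ℝ, ∀ᶠ T in nhdsWithin (0:ℝ) (Set.Ioi 0),
      zmaxF a₁ a₂ a₃ g₁ g₂ T - zminF a₁ a₂ a₃ g₁ g₂ T ≤ Cb :=
  z_limits_at_zero_general a₁ a₂ a₃ g₁ g₂ ha₁ ha₂ ha₃ hg₁ hg₂
end

section
/- The functions T ↦ z_min(T) and T ↦ z_max(T) are continuous on (0,∞), as are the argmin and argmax functions T ↦ τ₁(T) and T ↦ τ₂(T). -/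
open Matrix Set Filter

/-!
Since `a₁, a₂, a₃` are distinct, the cascade matrix is diagonalisable with eigenvalues `-aᵢ`,
so `z(τ, T) = ∑ᵢ cᵢ e^{-aᵢ τ} / (1 - e^{-aᵢ T})` is jointly continuous for `T > 0`.
Substituting `τ = s T` turns the moving constraint set `[0, T]` into the fixed compact `[0, 1]`.
There Berge's argument applies: every cluster point of the maximisers as `T → T₀` is again a
maximiser at `T₀`, so a unique maximiser depends continuously on `T`. The extremal values are
then `z(τᵢ(T), T)`, continuous as compositions.
-/

open Topology Function

namespace Matrix

variable {n : Type*} [Fintype n] [DecidableEq n] {A P : Matrix n n ℝ} {d : n → ℝ}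

theorem exp_smul_eq_conj_diagonal (hP : IsUnit P.det) (hAP : A * P = P * diagonal d) (t : ℝ) :
    NormedSpace.exp (t • A) = P * diagonal (fun i => Real.exp (t * d i)) * P⁻¹ := by
  have htA : t • A = P * diagonal (t • d) * P⁻¹ := by
    rw [diagonal_smul, Matrix.mul_smul, Matrix.smul_mul, ← hAP,
      mul_nonsing_inv_cancel_right _ _ hP]
  rw [htA, exp_conj _ _ ((isUnit_iff_isUnit_det P).2 hP), exp_diagonal, Pi.exp_def,
    Real.exp_eq_exp_ℝ]
  rfl

theorem exp_smul_mul_inv_one_sub_exp_smul (hP : IsUnit P.det) (hAP : A * P = P * diagonal d)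
    (τ : ℝ) {T : ℝ} (hT : ∀ i, Real.exp (T * d i) ≠ 1) :
    NormedSpace.exp (τ • A) * (1 - NormedSpace.exp (T • A))⁻¹ =
      P * diagonal (fun i => Real.exp (τ * d i) / (1 - Real.exp (T * d i))) * P⁻¹ := by
  have hsub : 1 - NormedSpace.exp (T • A) =
      P * diagonal (fun i => 1 - Real.exp (T * d i)) * P⁻¹ := by
    rw [exp_smul_eq_conj_diagonal hP hAP, ← diagonal_one, ← diagonal_sub, diagonal_one,
      Matrix.mul_sub, Matrix.sub_mul, mul_one, mul_nonsing_inv _ hP]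
  have hdiag : (diagonal fun i => 1 - Real.exp (T * d i))⁻¹ =
      diagonal fun i => (1 - Real.exp (T * d i))⁻¹ := by
    refine inv_eq_left_inv ?_
    rw [diagonal_mul_diagonal, ← diagonal_one]
    exact congrArg diagonal (funext fun i => inv_mul_cancel₀ (sub_ne_zero.2 (hT i).symm))
  rw [hsub, mul_inv_rev, mul_inv_rev, nonsing_inv_nonsing_inv _ hP, hdiag,
    exp_smul_eq_conj_diagonal hP hAP]
  simp only [mul_assoc, nonsing_inv_mul_cancel_left _ _ hP, ← mul_assoc (diagonal _),
    diagonal_mul_diagonal, div_eq_mul_inv]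

end Matrix

theorem IsCompact.continuousWithinAt_of_isMaxOn_unique {X Y β : Type*} [TopologicalSpace X]
    [TopologicalSpace Y] [TopologicalSpace β] [Preorder β] [OrderClosedTopology β]
    {K : Set Y} (hK : IsCompact K) {s : Set X} {f : X → Y → β}
    (hf : ContinuousOn (uncurry f) (s ×ˢ K)) {σ : X → Y}
    (hσ : ∀ x ∈ s, σ x ∈ K ∧ IsMaxOn (f x) K (σ x)) {x₀ : X} (hx₀ : x₀ ∈ s)
    (huniq : ∀ y ∈ K, IsMaxOn (f x₀) K y → y = σ x₀) :
    ContinuousWithinAt σ s x₀ := by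
  refine hK.tendsto_nhds_of_unique_mapClusterPt
    (eventually_nhdsWithin_of_forall fun x hx => (hσ x hx).1) fun c hcK hc => huniq c hcK ?_
  obtain ⟨U, hUs, hσc⟩ := mapClusterPt_iff_ultrafilter.1 hc
  have hU : Tendsto id (U : Filter X) (𝓝 x₀) := hUs.trans nhdsWithin_le_nhds
  have hUs' : ∀ᶠ x in (U : Filter X), x ∈ s := hUs self_mem_nhdsWithin
  have hlim {g : X → Y} {y : Y} (hy : y ∈ K) (hgy : Tendsto g U (𝓝 y))
      (hgK : ∀ᶠ x in (U : Filter X), g x ∈ K) :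
      Tendsto (fun x => f x (g x)) U (𝓝 (f x₀ y)) :=
    (hf (x₀, y) ⟨hx₀, hy⟩).tendsto.comp <| tendsto_nhdsWithin_iff.2
      ⟨hU.prodMk_nhds hgy, hUs'.and hgK |>.mono fun _ h => h⟩
  refine isMaxOn_iff.2 fun y hy => le_of_tendsto_of_tendsto
    (hlim hy tendsto_const_nhds (.of_forall fun _ => hy))
    (hlim hcK hσc (hUs'.mono fun x hx => (hσ x hx).1)) ?_
  exact hUs'.mono fun x hx => isMaxOn_iff.1 (hσ x hx).2 y hy

theorem isMaxOn_Icc_mul_iff {β : Type*} [Preorder β] {h : ℝ → β} {T : ℝ} (hT : 0 < T) (s : ℝ) :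
    IsMaxOn h (Icc 0 T) (s * T) ↔ IsMaxOn (fun x => h (x * T)) (Icc 0 1) s := by
  have hIcc : Icc 0 T = (· * T) '' Icc 0 1 := by
    rw [image_mul_right_Icc' 0 1 hT, zero_mul, one_mul]
  rw [isMaxOn_iff, isMaxOn_iff, hIcc, forall_mem_image]

theorem continuousOn_of_isMaxOn_Icc_unique {β : Type*} [TopologicalSpace β] [Preorder β]
    [OrderClosedTopology β] {f : ℝ → ℝ → β} (hf : ContinuousOn (uncurry f) {p | 0 < p.2})
    {σ : ℝ → ℝ} (hσ : ∀ T, 0 < T → σ T ∈ Icc 0 T ∧ IsMaxOn (f · T) (Icc 0 T) (σ T) ∧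
      ∀ y ∈ Icc 0 T, IsMaxOn (f · T) (Icc 0 T) y → y = σ T) :
    ContinuousOn σ (Ioi 0) := by
  have hσT : ∀ T, 0 < T → σ T / T * T = σ T := fun T hT => div_mul_cancel₀ _ hT.ne'
  have hmem : ∀ T, 0 < T → ∀ s, s ∈ Icc (0 : ℝ) 1 ↔ s * T ∈ Icc 0 T := fun T hT s => by
    rw [← mem_preimage (f := (· * T)), preimage_mul_const_Icc₀ _ _ hT, zero_div, div_self hT.ne']
  have hf_rescaled : ContinuousOn (uncurry fun T s => f (s * T) T) (Ioi 0 ×ˢ Icc 0 1) :=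
    hf.comp (f := fun p : ℝ × ℝ => (p.2 * p.1, p.1)) (by fun_prop) fun _ hp => hp.1
  have hσ_rescaled : ContinuousOn (fun T => σ T / T) (Ioi 0) := fun T₀ hT₀ =>
    isCompact_Icc.continuousWithinAt_of_isMaxOn_unique (f := fun T s => f (s * T) T)
      hf_rescaled (fun T hT => ⟨(hmem T hT _).2 ((hσT T hT).symm ▸ (hσ T hT).1),
        (isMaxOn_Icc_mul_iff hT _).1 ((hσT T hT).symm ▸ (hσ T hT).2.1)⟩) hT₀
      fun y hy hymax => eq_div_of_mul_eq (ne_of_gt hT₀) <|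
        (hσ T₀ hT₀).2.2 _ ((hmem T₀ hT₀ y).1 hy) ((isMaxOn_Icc_mul_iff hT₀ y).2 hymax)
  exact (hσ_rescaled.mul continuousOn_id).congr fun T hT => (hσT T hT).symm

theorem continuousOn_of_isMinOn_Icc_unique {β : Type*} [TopologicalSpace β] [Preorder β]
    [OrderClosedTopology β] {f : ℝ → ℝ → β} (hf : ContinuousOn (uncurry f) {p | 0 < p.2})
    {σ : ℝ → ℝ} (hσ : ∀ T, 0 < T → σ T ∈ Icc 0 T ∧ IsMinOn (f · T) (Icc 0 T) (σ T) ∧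
      ∀ y ∈ Icc 0 T, IsMinOn (f · T) (Icc 0 T) y → y = σ T) :
    ContinuousOn σ (Ioi 0) :=
  continuousOn_of_isMaxOn_Icc_unique (β := βᵒᵈ) hf hσ

section Cascade

variable (a₁ a₂ a₃ g₁ g₂ : ℝ)

def dcas : Fin 3 → ℝ := ![-a₁, -a₂, -a₃]

noncomputable def Pcas : Matrix (Fin 3) (Fin 3) ℝ :=
  !![1, 0, 0; g₁ / (a₂ - a₁), 1, 0; g₁ * g₂ / ((a₂ - a₁) * (a₃ - a₁)), g₂ / (a₃ - a₂), 1]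

theorem det_Pcas : (Pcas a₁ a₂ a₃ g₁ g₂).det = 1 := by
  simp [Pcas, det_fin_three]

variable {a₁ a₂ a₃}

theorem Acas_mul_Pcas (h₁₂ : a₁ ≠ a₂) (h₁₃ : a₁ ≠ a₃) (h₂₃ : a₂ ≠ a₃) :
    Acas a₁ a₂ a₃ g₁ g₂ * Pcas a₁ a₂ a₃ g₁ g₂ =
      Pcas a₁ a₂ a₃ g₁ g₂ * diagonal (dcas a₁ a₂ a₃) := by
  have h₂₁ : a₂ - a₁ ≠ 0 := sub_ne_zero.2 h₁₂.symm
  have h₃₁ : a₃ - a₁ ≠ 0 := sub_ne_zero.2 h₁₃.symm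
  have h₃₂ : a₃ - a₂ ≠ 0 := sub_ne_zero.2 h₂₃.symm
  ext i j
  fin_cases i <;> fin_cases j <;>
    simp [Acas, Pcas, dcas, mul_apply, Fin.sum_univ_three] <;> field_simp <;> ring

theorem zfun_eq_sum (h₁₂ : a₁ ≠ a₂) (h₁₃ : a₁ ≠ a₃) (h₂₃ : a₂ ≠ a₃) (τ : ℝ) {T : ℝ}
    (hT : ∀ i, Real.exp (T * dcas a₁ a₂ a₃ i) ≠ 1) :
    zfun a₁ a₂ a₃ g₁ g₂ τ T =
      ∑ i, Pcas a₁ a₂ a₃ g₁ g₂ 2 i * ((Pcas a₁ a₂ a₃ g₁ g₂)⁻¹ *ᵥ Bcas) i *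
        (Real.exp (τ * dcas a₁ a₂ a₃ i) / (1 - Real.exp (T * dcas a₁ a₂ a₃ i))) := by
  rw [zfun, exp_smul_mul_inv_one_sub_exp_smul (by simp [det_Pcas])
    (Acas_mul_Pcas g₁ g₂ h₁₂ h₁₃ h₂₃) τ hT, ← mulVec_mulVec, ← mulVec_mulVec]
  simp only [mulVec, dotProduct, diagonal_apply, ite_mul, zero_mul, Finset.sum_ite_eq,
    Finset.mem_univ, if_true]
  exact Finset.sum_congr rfl fun i _ => by ring

theorem continuousOn_zfun (ha₁ : a₁ ≠ 0) (ha₂ : a₂ ≠ 0) (ha₃ : a₃ ≠ 0)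
    (h₁₂ : a₁ ≠ a₂) (h₁₃ : a₁ ≠ a₃) (h₂₃ : a₂ ≠ a₃) :
    ContinuousOn (uncurry (zfun a₁ a₂ a₃ g₁ g₂)) {p | p.2 ≠ 0} := by
  have hexp : ∀ T ≠ 0, ∀ i, Real.exp (T * dcas a₁ a₂ a₃ i) ≠ 1 := fun T hT i =>
    Real.exp_eq_one_iff _ |>.not.2 <| mul_ne_zero hT <| by fin_cases i <;> simpa [dcas]
  refine ContinuousOn.congr ?_ fun p hp => zfun_eq_sum g₁ g₂ h₁₂ h₁₃ h₂₃ p.1 (hexp p.2 hp)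
  refine continuousOn_finsetSum _ fun i _ => ?_
  fun_prop (disch := exact fun p hp => sub_ne_zero.2 (hexp _ hp i).symm)

end Cascade

theorem zmin_zmax_continuous_general (a₁ a₂ a₃ g₁ g₂ : ℝ)
    (ha₁ : 0 < a₁) (ha₂ : 0 < a₂) (ha₃ : 0 < a₃)
    (h₁₂ : a₁ ≠ a₂) (h₁₃ : a₁ ≠ a₃) (h₂₃ : a₂ ≠ a₃)
    (τ₁ τ₂ : ℝ → ℝ)
    (hτ₁ : ∀ T : ℝ, 0 < T → τ₁ T ∈ Set.Ioo 0 T ∧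
      IsMinOn (fun τ => zfun a₁ a₂ a₃ g₁ g₂ τ T) (Set.Icc 0 T) (τ₁ T) ∧
      ∀ σ ∈ Set.Icc (0:ℝ) T,
        IsMinOn (fun τ => zfun a₁ a₂ a₃ g₁ g₂ τ T) (Set.Icc 0 T) σ → σ = τ₁ T)
    (hτ₂ : ∀ T : ℝ, 0 < T → τ₂ T ∈ Set.Ioo 0 T ∧
      IsMaxOn (fun τ => zfun a₁ a₂ a₃ g₁ g₂ τ T) (Set.Icc 0 T) (τ₂ T) ∧
      ∀ σ ∈ Set.Icc (0:ℝ) T,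
        IsMaxOn (fun τ => zfun a₁ a₂ a₃ g₁ g₂ τ T) (Set.Icc 0 T) σ → σ = τ₂ T) :
    ContinuousOn (zminF a₁ a₂ a₃ g₁ g₂) (Set.Ioi 0) ∧
    ContinuousOn (zmaxF a₁ a₂ a₃ g₁ g₂) (Set.Ioi 0) ∧
    ContinuousOn τ₁ (Set.Ioi 0) ∧
    ContinuousOn τ₂ (Set.Ioi 0) := by
  have hz : ContinuousOn (uncurry (zfun a₁ a₂ a₃ g₁ g₂)) {p | 0 < p.2} :=
    (continuousOn_zfun g₁ g₂ ha₁.ne' ha₂.ne' ha₃.ne' h₁₂ h₁₃ h₂₃).mono fun _ hp => ne_of_gt hp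
  have hτ₁_mem T (hT : 0 < T) : τ₁ T ∈ Icc 0 T := Ioo_subset_Icc_self (hτ₁ T hT).1
  have hτ₂_mem T (hT : 0 < T) : τ₂ T ∈ Icc 0 T := Ioo_subset_Icc_self (hτ₂ T hT).1
  have hτ₁_cont : ContinuousOn τ₁ (Ioi 0) :=
    continuousOn_of_isMinOn_Icc_unique hz fun T hT => ⟨hτ₁_mem T hT, (hτ₁ T hT).2⟩
  have hτ₂_cont : ContinuousOn τ₂ (Ioi 0) :=
    continuousOn_of_isMaxOn_Icc_unique hz fun T hT => ⟨hτ₂_mem T hT, (hτ₂ T hT).2⟩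
  have hzmin : EqOn (fun T => zfun a₁ a₂ a₃ g₁ g₂ (τ₁ T) T) (zminF a₁ a₂ a₃ g₁ g₂) (Ioi 0) :=
    fun T hT => by rw [zminF, sInf_image', (hτ₁ T hT).2.1.iInf_eq (hτ₁_mem T hT)]
  have hzmax : EqOn (fun T => zfun a₁ a₂ a₃ g₁ g₂ (τ₂ T) T) (zmaxF a₁ a₂ a₃ g₁ g₂) (Ioi 0) :=
    fun T hT => by rw [zmaxF, sSup_image', (hτ₂ T hT).2.1.iSup_eq (hτ₂_mem T hT)]
  exact ⟨(hz.comp (hτ₁_cont.prodMk continuousOn_id) fun _ hT => hT).congr hzmin.symm,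
    (hz.comp (hτ₂_cont.prodMk continuousOn_id) fun _ hT => hT).congr hzmax.symm,
    hτ₁_cont, hτ₂_cont⟩

theorem zmin_zmax_continuous (a₁ a₂ a₃ g₁ g₂ : ℝ)
    (ha₁ : 0 < a₁) (ha₂ : 0 < a₂) (ha₃ : 0 < a₃)
    (h₁₂ : a₁ ≠ a₂) (h₁₃ : a₁ ≠ a₃) (h₂₃ : a₂ ≠ a₃)
    (hg₁ : 0 < g₁) (hg₂ : 0 < g₂)
    (τ₁ τ₂ : ℝ → ℝ)
    (hτ₁ : ∀ T : ℝ, 0 < T → τ₁ T ∈ Set.Ioo 0 T ∧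
      IsMinOn (fun τ => zfun a₁ a₂ a₃ g₁ g₂ τ T) (Set.Icc 0 T) (τ₁ T) ∧
      ∀ σ ∈ Set.Icc (0:ℝ) T,
        IsMinOn (fun τ => zfun a₁ a₂ a₃ g₁ g₂ τ T) (Set.Icc 0 T) σ → σ = τ₁ T)
    (hτ₂ : ∀ T : ℝ, 0 < T → τ₂ T ∈ Set.Ioo 0 T ∧
      IsMaxOn (fun τ => zfun a₁ a₂ a₃ g₁ g₂ τ T) (Set.Icc 0 T) (τ₂ T) ∧
      ∀ σ ∈ Set.Icc (0:ℝ) T,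
        IsMaxOn (fun τ => zfun a₁ a₂ a₃ g₁ g₂ τ T) (Set.Icc 0 T) σ → σ = τ₂ T) :
    ContinuousOn (zminF a₁ a₂ a₃ g₁ g₂) (Set.Ioi 0) ∧
    ContinuousOn (zmaxF a₁ a₂ a₃ g₁ g₂) (Set.Ioi 0) ∧
    ContinuousOn τ₁ (Set.Ioi 0) ∧
    ContinuousOn τ₂ (Set.Ioi 0) :=
  zmin_zmax_continuous_general a₁ a₂ a₃ g₁ g₂ ha₁ ha₂ ha₃ h₁₂ h₁₃ h₂₃ τ₁ τ₂ hτ₁ hτ₂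
end
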